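/- (Nash-Williams inequality) If Π_1, …, Π_J are pairwise disjoint edge cut-sets each separating a vertex v from a vertex set U in a finite graph with unit conductance on each edge, then the effective resistance satisfies R(v ↔ U) ≥ ∑_{j=1}^J 1/|Π_j|. -/

import Mathlib

/-- Dirichlet energy of `f` on a graph with unit conductance on each edge. -/
noncomputable def dirichletEnergy {V : Type*} [Fintype V]
    (G : SimpleGraph V) [DecidableRel G.Adj] (f : V → ℝ) : ℝ :=
  (1 / 2) * ∑ u, ∑ v, if G.Adj u v then (f u - f v) ^ 2 else 0

/-- Effective resistance from a vertex `v` to a set of vertices `U` in the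
unit-conductance network on `G` (the set `U` is glued to a single vertex),
defined via the Dirichlet variational principle. -/
noncomputable def effResToSet {V : Type*} [Fintype V]
    (G : SimpleGraph V) [DecidableRel G.Adj] (v : V) (U : Finset V) : ℝ :=
  (sInf (dirichletEnergy G '' {f : V → ℝ | f v = 1 ∧ ∀ u ∈ U, f u = 0}))⁻¹

/-- A set `Π` of edges is a cut-set separating `v` from `U` if every walk from
`v` to a vertex of `U` uses an edge of `Π`. -/
def IsCutSet {V : Type*} (G : SimpleGraph V) (v : V) (U : Finset V)
    (Pi : Finset (Sym2 V)) : Prop :=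
  (∀ e ∈ Pi, e ∈ G.edgeSet) ∧
    ∀ u ∈ U, ∀ w : G.Walk v u, ∃ e ∈ Pi, e ∈ w.edges

section NWAux

open Finset

/-- `x` is separated from `U` by the edge set `P`. -/
def NWSep {V : Type*} (G : SimpleGraph V) (U : Finset V) (P : Finset (Sym2 V))
    (x : V) : Prop :=
  ∀ u ∈ U, ∀ w : G.Walk x u, ∃ e ∈ P, e ∈ w.edges

variable {V : Type*} [Fintype V] [DecidableEq V]
variable {G : SimpleGraph V} [DecidableRel G.Adj] {U : Finset V} {P : Finset (Sym2 V)}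

lemma nwsep_not_mem {u : V} (hu : u ∈ U) : ¬ NWSep G U P u := by
  intro h
  obtain ⟨e, _, he⟩ := h u hu SimpleGraph.Walk.nil
  simp at he

lemma nwsep_of_adj {x y : V} (hxy : G.Adj x y) (hP : s(x, y) ∉ P)
    (hs : NWSep G U P x) : NWSep G U P y := by
  intro u hu w
  obtain ⟨e, heP, hew⟩ := hs u hu (SimpleGraph.Walk.cons hxy w)
  rw [SimpleGraph.Walk.edges_cons] at hew
  rcases List.mem_cons.mp hew with h | h
  · exact absurd (h ▸ heP) hP
  · exact ⟨e, heP, h⟩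

lemma nwsep_iff_of_adj {x y : V} (hxy : G.Adj x y) (hP : s(x, y) ∉ P) :
    NWSep G U P x ↔ NWSep G U P y := by
  constructor
  · exact nwsep_of_adj hxy hP
  · apply nwsep_of_adj hxy.symm
    rwa [Sym2.eq_swap]

omit [DecidableEq V] in
lemma nw_dE_nonneg (f : V → ℝ) : 0 ≤ dirichletEnergy G f := by
  unfold dirichletEnergy
  have : (0:ℝ) ≤ ∑ u, ∑ v, if G.Adj u v then (f u - f v) ^ 2 else 0 :=
    Finset.sum_nonneg fun u _ => Finset.sum_nonneg fun v _ => by positivity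
  linarith

lemma nw_pair_le_dE {f : V → ℝ} {x y : V} (h : G.Adj x y) :
    (f x - f y)^2 ≤ dirichletEnergy G f := by
  classical
  set g : V → ℝ := fun u => ∑ w, if G.Adj u w then (f u - f w) ^ 2 else 0 with hg
  have hgnn : ∀ u, 0 ≤ g u := fun u =>
    Finset.sum_nonneg fun w _ => by positivity
  have h1 : g x + g y ≤ ∑ u, g u := by
    have := Finset.sum_le_sum_of_subset_of_nonneg
      (Finset.subset_univ ({x, y} : Finset V)) (fun u _ _ => hgnn u)
    rwa [Finset.sum_pair h.ne] at this
  have h2 : (f x - f y)^2 ≤ g x := by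
    have := Finset.single_le_sum (f := fun w => if G.Adj x w then (f x - f w) ^ 2 else 0)
      (fun w _ => by positivity) (Finset.mem_univ y)
    simpa [hg, h] using this
  have h3 : (f x - f y)^2 ≤ g y := by
    have := Finset.single_le_sum (f := fun w => if G.Adj y w then (f y - f w) ^ 2 else 0)
      (fun w _ => by positivity) (Finset.mem_univ x)
    simp only [if_pos h.symm] at this
    calc (f x - f y)^2 = (f y - f x)^2 := by ring
    _ ≤ g y := this
  unfold dirichletEnergy
  linarith

omit [DecidableEq V] in
lemma nw_walk_telescope (f : V → ℝ) {a b : V} (w : G.Walk a b) :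
    f a - f b = (w.darts.map (fun d => f d.toProd.1 - f d.toProd.2)).sum := by
  induction w with
  | nil => simp
  | cons h p ih =>
    rw [SimpleGraph.Walk.darts_cons]
    simp only [List.map_cons, List.sum_cons, ← ih]
    ring

lemma nw_dE_lower {f : V → ℝ} {v u : V} (hfv : f v = 1) (hfu : f u = 0)
    (w0 : G.Walk v u) :
    (1 / ((w0.length : ℝ) + 1))^2 ≤ dirichletEnergy G f := by
  set E := dirichletEnergy G f with hE
  have hE0 : 0 ≤ E := nw_dE_nonneg f
  have key : ∀ x ∈ w0.darts.map (fun d => f d.toProd.1 - f d.toProd.2),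
      x ≤ Real.sqrt E := by
    intro x hx
    obtain ⟨d, _, rfl⟩ := List.mem_map.mp hx
    have h2 : (f d.toProd.1 - f d.toProd.2)^2 ≤ E := nw_pair_le_dE d.adj
    calc f d.toProd.1 - f d.toProd.2 ≤ |f d.toProd.1 - f d.toProd.2| := le_abs_self _
      _ = Real.sqrt ((f d.toProd.1 - f d.toProd.2)^2) := (Real.sqrt_sq_eq_abs _).symm
      _ ≤ Real.sqrt E := Real.sqrt_le_sqrt h2
  have h1 : (1:ℝ) ≤ (w0.length : ℝ) * Real.sqrt E := by
    have := List.sum_le_card_nsmul _ _ key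
    rw [List.length_map, SimpleGraph.Walk.length_darts, nsmul_eq_mul] at this
    have ht := nw_walk_telescope f w0
    rw [hfv, hfu, sub_zero] at ht
    linarith [ht ▸ this]
  have hs : 0 ≤ Real.sqrt E := Real.sqrt_nonneg _
  have h3 : (1:ℝ) ≤ ((w0.length : ℝ) + 1) * Real.sqrt E := by nlinarith
  have hL : (0:ℝ) < (w0.length : ℝ) + 1 := by positivity
  have h4 : 1 / ((w0.length : ℝ) + 1) ≤ Real.sqrt E := by
    rw [div_le_iff₀ hL]; linarith [h3]
  calc (1 / ((w0.length : ℝ) + 1))^2 ≤ (Real.sqrt E)^2 := by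
        apply pow_le_pow_left₀ (by positivity) h4
    _ = E := Real.sq_sqrt hE0

lemma nw_count_pairs {e : Sym2 V} (he : ¬ e.IsDiag) :
    ∑ x : V, ∑ y : V, (if s(x, y) = e then (1:ℝ) else 0) = 2 := by
  induction e with
  | _ a b =>
    rw [Sym2.mk_isDiag_iff] at he
    have key : ∀ x y : V, (if s(x, y) = s(a, b) then (1:ℝ) else 0)
        = (if x = a then (if y = b then (1:ℝ) else 0) else 0)
          + (if x = b then (if y = a then (1:ℝ) else 0) else 0) := by
      intro x y
      by_cases h1 : x = a <;> by_cases h2 : y = b <;> by_cases h3 : x = b <;>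
        by_cases h4 : y = a <;> simp_all [Sym2.eq_iff] <;> tauto
    simp only [key, Finset.sum_add_distrib]
    simp [Finset.sum_ite_eq']
    norm_num


open Classical in
lemma nw_energy_le {J : ℕ} (Pi : Fin J → Finset (Sym2 V))
    (hedge : ∀ j, ∀ e ∈ Pi j, e ∈ G.edgeSet)
    (hdisj : ∀ i j, i ≠ j → Disjoint (Pi i) (Pi j))
    (a : Fin J → ℝ) (ha0 : ∀ j, 0 ≤ a j) :
    dirichletEnergy G (fun x => ∑ j, if NWSep G U (Pi j) x then a j else 0)
      ≤ ∑ j, ((Pi j).card : ℝ) * (a j)^2 := by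
  classical
  set f : V → ℝ := fun x => ∑ j, if NWSep G U (Pi j) x then a j else 0 with hf
  have step1 : ∀ x y : V, G.Adj x y →
      (f x - f y)^2 ≤ ∑ j, (if s(x, y) ∈ Pi j then (a j)^2 else 0) := by
    intro x y hxy
    set T : Finset (Fin J) := Finset.univ.filter (fun j => s(x, y) ∈ Pi j) with hT
    have hdiff : f x - f y = ∑ j ∈ T,
        ((if NWSep G U (Pi j) x then a j else 0) -
          (if NWSep G U (Pi j) y then a j else 0)) := by
      rw [hf]
      rw [← Finset.sum_sub_distrib]
      symm
      apply Finset.sum_filter_of_ne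
      intro j _ hne0
      by_contra hP
      rw [nwsep_iff_of_adj hxy hP] at hne0
      simp at hne0
    have hTcard : ∀ i ∈ T, ∀ j ∈ T, i = j := by
      intro i hi j hj
      by_contra hne'
      exact (Finset.disjoint_left.mp (hdisj i j hne'))
        (Finset.mem_filter.mp hi).2 (Finset.mem_filter.mp hj).2
    have hRnn : (0:ℝ) ≤ ∑ j, (if s(x, y) ∈ Pi j then (a j)^2 else 0) :=
      Finset.sum_nonneg fun j _ => by positivity
    rcases T.eq_empty_or_nonempty with hTe | ⟨j0, hj0⟩
    · rw [hTe, Finset.sum_empty] at hdiff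
      rw [hdiff]
      simpa using hRnn
    · have hTs : T = {j0} := by
        apply Finset.eq_singleton_iff_unique_mem.2
        exact ⟨hj0, fun x hx => hTcard x hx j0 hj0⟩
      rw [hTs, Finset.sum_singleton] at hdiff
      have hsq : (f x - f y)^2 ≤ (a j0)^2 := by
        rw [hdiff]
        have := ha0 j0
        split_ifs <;> nlinarith
      have hmem : s(x, y) ∈ Pi j0 := (Finset.mem_filter.mp hj0).2
      calc (f x - f y)^2 ≤ (a j0)^2 := hsq
        _ = (if s(x, y) ∈ Pi j0 then (a j0)^2 else 0) := (if_pos hmem).symm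
        _ ≤ ∑ j, (if s(x, y) ∈ Pi j then (a j)^2 else 0) :=
          Finset.single_le_sum (f := fun j => if s(x, y) ∈ Pi j then (a j)^2 else 0)
            (fun j _ => by positivity) (Finset.mem_univ j0)
  have step2 : dirichletEnergy G f ≤
      (1/2) * ∑ x : V, ∑ y : V, ∑ j, (if s(x, y) ∈ Pi j then (a j)^2 else 0) := by
    unfold dirichletEnergy
    have key : ∀ x y : V, (if G.Adj x y then (f x - f y) ^ 2 else 0) ≤
        ∑ j, (if s(x, y) ∈ Pi j then (a j)^2 else 0) := by
      intro x y
      by_cases h : G.Adj x y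
      · rw [if_pos h]; exact step1 x y h
      · rw [if_neg h]; exact Finset.sum_nonneg fun j _ => by positivity
    have h2 : ∑ x : V, ∑ y : V, (if G.Adj x y then (f x - f y) ^ 2 else 0) ≤
        ∑ x : V, ∑ y : V, ∑ j, (if s(x, y) ∈ Pi j then (a j)^2 else 0) :=
      Finset.sum_le_sum fun x _ => Finset.sum_le_sum fun y _ => key x y
    linarith
  have step3 : ∑ x : V, ∑ y : V, ∑ j, (if s(x, y) ∈ Pi j then (a j)^2 else 0)
      = ∑ j, 2 * ((Pi j).card : ℝ) * (a j)^2 := by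
    have swap : ∑ x : V, ∑ y : V, ∑ j, (if s(x, y) ∈ Pi j then (a j)^2 else 0)
        = ∑ j, ∑ x : V, ∑ y : V, (if s(x, y) ∈ Pi j then (a j)^2 else 0) := by
      calc ∑ x : V, ∑ y : V, ∑ j, (if s(x, y) ∈ Pi j then (a j)^2 else 0)
          = ∑ x : V, ∑ j, ∑ y : V, (if s(x, y) ∈ Pi j then (a j)^2 else 0) :=
            Finset.sum_congr rfl (fun x _ => Finset.sum_comm)
        _ = ∑ j, ∑ x : V, ∑ y : V, (if s(x, y) ∈ Pi j then (a j)^2 else 0) :=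
            Finset.sum_comm
    rw [swap]
    apply Finset.sum_congr rfl
    intro j _
    have hrw : ∀ x y : V, (if s(x, y) ∈ Pi j then (a j)^2 else 0)
        = (a j)^2 * ∑ e ∈ Pi j, (if s(x, y) = e then (1:ℝ) else 0) := by
      intro x y
      rw [Finset.sum_ite_eq]
      split_ifs <;> simp
    simp only [hrw, ← Finset.mul_sum]
    have hcnt : ∑ x : V, ∑ y : V, ∑ e ∈ Pi j, (if s(x, y) = e then (1:ℝ) else 0)
        = 2 * ((Pi j).card : ℝ) := by
      calc ∑ x : V, ∑ y : V, ∑ e ∈ Pi j, (if s(x, y) = e then (1:ℝ) else 0)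
          = ∑ x : V, ∑ e ∈ Pi j, ∑ y : V, (if s(x, y) = e then (1:ℝ) else 0) :=
            Finset.sum_congr rfl (fun x _ => Finset.sum_comm)
        _ = ∑ e ∈ Pi j, ∑ x : V, ∑ y : V, (if s(x, y) = e then (1:ℝ) else 0) :=
            Finset.sum_comm
        _ = ∑ e ∈ Pi j, (2:ℝ) := by
            apply Finset.sum_congr rfl
            intro e he
            exact nw_count_pairs (G.not_isDiag_of_mem_edgeSet (hedge j e he))
        _ = 2 * ((Pi j).card : ℝ) := by
            rw [Finset.sum_const, nsmul_eq_mul]; ring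
    rw [hcnt]; ring
  calc dirichletEnergy G f
      ≤ (1/2) * ∑ x : V, ∑ y : V, ∑ j, (if s(x, y) ∈ Pi j then (a j)^2 else 0) := step2
    _ = (1/2 : ℝ) * ∑ j, 2 * ((Pi j).card : ℝ) * (a j)^2 := by rw [step3]
    _ = ∑ j, ((Pi j).card : ℝ) * (a j)^2 := by
        rw [Finset.mul_sum]; apply Finset.sum_congr rfl; intros; ring

end NWAux

/-- Nash-Williams inequality: if `Π_1, …, Π_J` are pairwise disjoint edge
cut-sets each separating `v` from `U` in a finite connected graph with unit
conductance on each edge, then `R(v ↔ U) ≥ ∑_j 1/|Π_j|`. -/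
theorem nash_williams
    {V : Type*} [Fintype V] [DecidableEq V] [Nonempty V]
    (G : SimpleGraph V) [DecidableRel G.Adj] (hconn : G.Connected)
    (v : V) (U : Finset V) (hU : U.Nonempty) (hvU : v ∉ U)
    (J : ℕ) (Pi : Fin J → Finset (Sym2 V))
    (hcut : ∀ j, IsCutSet G v U (Pi j))
    (hdisj : ∀ i j, i ≠ j → Disjoint (Pi i) (Pi j)) :
    ∑ j, (1 : ℝ) / ((Pi j).card : ℝ) ≤ effResToSet G v U := by
  classical
  obtain ⟨u0, hu0⟩ := hU
  obtain ⟨w0⟩ := hconn.preconnected v u0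
  set A : Set (V → ℝ) := {f : V → ℝ | f v = 1 ∧ ∀ u ∈ U, f u = 0} with hA
  set I := sInf (dirichletEnergy G '' A) with hI
  have hmem0 : (fun x => if x = v then (1:ℝ) else 0) ∈ A := by
    refine ⟨if_pos rfl, fun u hu => if_neg fun h => hvU ?_⟩
    rw [← h]
    exact hu
  have hne : (dirichletEnergy G '' A).Nonempty := ⟨_, _, hmem0, rfl⟩
  have hbdd : BddBelow (dirichletEnergy G '' A) := by
    refine ⟨0, ?_⟩
    rintro x ⟨f, _, rfl⟩
    exact nw_dE_nonneg f
  have hIpos : 0 < I := by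
    have hle : (1 / ((w0.length : ℝ) + 1))^2 ≤ I := by
      apply le_csInf hne
      rintro x ⟨f, hf, rfl⟩
      exact nw_dE_lower hf.1 (hf.2 u0 hu0) w0
    have h0 : (0:ℝ) < (1 / ((w0.length : ℝ) + 1))^2 := by positivity
    linarith
  rcases Nat.eq_zero_or_pos J with hJ | hJ
  · subst hJ
    simp only [Finset.univ_eq_empty, Finset.sum_empty, effResToSet]
    exact inv_nonneg.2 (le_of_lt hIpos)
  have hcard : ∀ j, 0 < ((Pi j).card : ℝ) := by
    intro j
    obtain ⟨e, he, _⟩ := (hcut j).2 u0 hu0 w0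
    exact_mod_cast Finset.card_pos.2 ⟨e, he⟩
  obtain ⟨S, hS⟩ : ∃ S : ℝ, S = ∑ j, (1 : ℝ) / ((Pi j).card : ℝ) := ⟨_, rfl⟩
  rw [← hS]
  have hSpos : 0 < S := hS ▸ Finset.sum_pos
    (fun j _ => div_pos one_pos (hcard j)) ⟨⟨0, hJ⟩, Finset.mem_univ _⟩
  have ha0 : ∀ j : Fin J, 0 ≤ (1 / ((Pi j).card : ℝ)) / S :=
    fun j => div_nonneg (div_nonneg zero_le_one (hcard j).le) hSpos.le
  have hfA : (fun x => ∑ j, if NWSep G U (Pi j) x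
      then (1 / ((Pi j).card : ℝ)) / S else 0) ∈ A := by
    constructor
    · show (∑ j, if NWSep G U (Pi j) v then (1 / ((Pi j).card : ℝ)) / S else 0) = 1
      have hsep : ∀ j : Fin J, NWSep G U (Pi j) v := fun j => (hcut j).2
      rw [Finset.sum_congr rfl (fun j _ => if_pos (hsep j))]
      rw [← Finset.sum_div, ← hS, div_self (ne_of_gt hSpos)]
    · intro u hu
      show (∑ j, if NWSep G U (Pi j) u then (1 / ((Pi j).card : ℝ)) / S else 0) = 0
      rw [Finset.sum_congr rfl (fun j _ => if_neg (nwsep_not_mem hu))]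
      simp
  have hEf := nw_energy_le (G := G) (U := U) Pi (fun j => (hcut j).1) hdisj
    (fun j => (1 / ((Pi j).card : ℝ)) / S) ha0
  have hsum : ∑ j, ((Pi j).card : ℝ) * ((1 / ((Pi j).card : ℝ)) / S)^2 = 1 / S := by
    have hper : ∀ j : Fin J, ((Pi j).card : ℝ) * ((1 / ((Pi j).card : ℝ)) / S)^2
        = (1 / ((Pi j).card : ℝ)) / S^2 := by
      intro j
      have h1 := (hcard j).ne'
      have h2 := hSpos.ne'
      field_simp
    calc ∑ j, ((Pi j).card : ℝ) * ((1 / ((Pi j).card : ℝ)) / S)^2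
        = ∑ j, (1 / ((Pi j).card : ℝ)) / S^2 :=
          Finset.sum_congr rfl (fun j _ => hper j)
      _ = S / S^2 := by rw [← Finset.sum_div, ← hS]
      _ = 1 / S := by
          rw [sq]
          field_simp
  have hle : I ≤ 1 / S := by
    have hmem : dirichletEnergy G (fun x => ∑ j, if NWSep G U (Pi j) x
        then (1 / ((Pi j).card : ℝ)) / S else 0) ∈ dirichletEnergy G '' A :=
      ⟨_, hfA, rfl⟩
    calc I ≤ dirichletEnergy G (fun x => ∑ j, if NWSep G U (Pi j) x
          then (1 / ((Pi j).card : ℝ)) / S else 0) := csInf_le hbdd hmem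
      _ ≤ ∑ j, ((Pi j).card : ℝ) * ((1 / ((Pi j).card : ℝ)) / S)^2 := hEf
      _ = 1 / S := hsum
  show S ≤ effResToSet G v U
  have heq : effResToSet G v U = I⁻¹ := rfl
  rw [heq, inv_eq_one_div, le_div_iff₀ hIpos]
  calc S * I ≤ S * (1 / S) := mul_le_mul_of_nonneg_left hle hSpos.le
    _ = 1 := by field_simp
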